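/- arXiv:1909.02045 — 3 statements merged into one kernel-verified Lean document; each statement's English description precedes it below -/
import Mathlib

section
/- Let r ≥ t ≥ 1 be integers. If M is a finite loopless matroid of rank r with no (t+1)-claw, then the ground set of M has at least 2r − t elements. -/
/-- A matroid is *loopless* if every single element of the ground set is independent. -/
def Matroid.IsLoopless {α : Type*} (M : Matroid α) : Prop :=
  ∀ e ∈ M.E, M.Indep {e}

/-- A *claw* of a matroid is a set that is both a flat and independent. -/
def Matroid.IsClaw {α : Type*} (M : Matroid α) (S : Set α) : Prop :=
  M.IsFlat S ∧ M.Indep S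

/-!
Take a claw `S` with `|S| ≤ t` that no element extends to a larger claw (it exists since `∅` is a
claw of a loopless matroid), and extend it to a base `B`. For `e ∈ B \ S` the independent set
`S + e` is not a flat, so its closure contains some `f(e) ∉ B`. If `f(e) = f(e')` with `e ≠ e'`,
closure exchange gives `cl(S + e) = cl(S + f(e)) = cl(S + e')`, contradicting independence of
`S + e + e'`. Hence `|E \ B| ≥ |B \ S| ≥ r - t`.
-/

open Set

namespace Matroid

variable {α : Type*} {M : Matroid α} {I J S B : Set α} {e e' : α}

theorem IsLoopless.loopless (hM : M.IsLoopless) : M.Loopless :=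
  loopless_iff_forall_isNonloop.2 fun e he ↦ indep_singleton.1 (hM e he)

theorem IsLoopless.isClaw_empty (hM : M.IsLoopless) : M.IsClaw ∅ := by
  have := hM.loopless
  refine ⟨?_, M.empty_indep⟩
  simpa [closure_empty] using M.isFlat_closure ∅

theorem exists_isClaw_ncard_le_not_isClaw_insert {t : ℕ} (hE : M.E.Finite) (h0 : M.IsClaw ∅)
    (hclaw : ¬ ∃ S, M.IsClaw S ∧ S.ncard = t + 1) :
    ∃ S, M.IsClaw S ∧ S.ncard ≤ t ∧ ∀ e ∉ S, ¬ M.IsClaw (insert e S) := by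
  have hfin : {S | M.IsClaw S ∧ S.ncard ≤ t}.Finite :=
    hE.finite_subsets.subset fun S hS ↦ hS.1.1.subset_ground
  obtain ⟨S, ⟨hS, hSt⟩, hmax⟩ := hfin.exists_maximal ⟨∅, h0, by simp⟩
  refine ⟨S, hS, hSt, fun e heS he ↦ ?_⟩
  have hcard : (insert e S).ncard = S.ncard + 1 :=
    ncard_insert_of_notMem heS (hE.subset hS.1.subset_ground)
  rcases hSt.lt_or_eq with hlt | rfl
  · exact heS (hmax ⟨he, by omega⟩ (subset_insert e S) (mem_insert e S))
  · exact hclaw ⟨_, he, hcard⟩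

theorem Indep.closure_subset_iff_isFlat (hJ : M.Indep J) (hIJ : I ⊆ J) :
    M.closure I ⊆ J ↔ M.IsFlat I := by
  refine ⟨fun h ↦ ?_, fun h ↦ h.closure.subset.trans hIJ⟩
  have hcl : M.closure I = I := by
    rw [← inter_eq_left.2 h, hJ.closure_inter_eq_self_of_subset hIJ]
  exact hcl ▸ M.isFlat_closure I

theorem Indep.closure_insert_inter_closure_insert_subset (hI : M.Indep (insert e (insert e' I)))
    (he : e ∉ insert e' I) :
    M.closure (insert e I) ∩ M.closure (insert e' I) ⊆ M.closure I := by
  rintro f ⟨hfe, hfe'⟩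
  by_contra hfI
  have hcl : M.closure (insert e I) = M.closure (insert e' I) :=
    (M.closure_insert_congr ⟨hfe, hfI⟩).symm.trans (M.closure_insert_congr ⟨hfe', hfI⟩)
  have he_cl : e ∈ M.closure (insert e' I) :=
    hcl ▸ M.mem_closure_of_mem (mem_insert e I) (hI.subset (insert_subset_insert
      (subset_insert e' I))).subset_ground
  exact ((hI.subset (subset_insert _ _)).insert_indep_iff_of_notMem he).1 hI |>.2 he_cl

theorem Indep.encard_sdiff_le_encard_ground_sdiff (hB : M.Indep B) (hSB : S ⊆ B)
    (hS : M.IsFlat S) (hins : ∀ e ∈ B \ S, ¬ M.IsFlat (insert e S)) :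
    (B \ S).encard ≤ (M.E \ B).encard := by
  have hout : ∀ e ∈ B \ S, ∃ f ∈ M.closure (insert e S), f ∉ B := by
    intro e he
    by_contra! h
    exact hins e he ((hB.closure_subset_iff_isFlat (insert_subset he.1 hSB)).1 h)
  choose! f hf_cl hf_notMem using hout
  refine encard_le_encard_of_injOn
    (fun e he ↦ ⟨M.closure_subset_ground _ (hf_cl e he), hf_notMem e he⟩) ?_
  intro e he e' he' hee'
  by_contra hne
  have hfS : f e ∉ M.closure S := by
    rw [hS.closure]
    exact fun h ↦ hf_notMem e he (hSB h)
  have hind : M.Indep (insert e (insert e' S)) :=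
    hB.subset (insert_subset he.1 (insert_subset he'.1 hSB))
  exact hfS (hind.closure_insert_inter_closure_insert_subset (by simp [hne, he.2])
    ⟨hf_cl e he, hee' ▸ hf_cl e' he'⟩)

end Matroid

theorem loopless_claw_free_lower_bound_general {α : Type*} (r t : ℕ)
    (M : Matroid α) (hfin : M.E.Finite) (hloopless : M.IsLoopless)
    (hrank : ∃ B, M.IsBase B ∧ B.ncard = r)
    (hclaw : ¬ ∃ S, M.IsClaw S ∧ S.ncard = t + 1) :
    2 * r - t ≤ M.E.ncard := by
  obtain ⟨B₀, hB₀, rfl⟩ := hrank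
  obtain ⟨S, hS, hSt, hmax⟩ :=
    M.exists_isClaw_ncard_le_not_isClaw_insert hfin hloopless.isClaw_empty hclaw
  obtain ⟨B, hB, hSB⟩ := hS.2.exists_isBase_superset
  have hcount := hB.indep.encard_sdiff_le_encard_ground_sdiff hSB hS.1 fun e he hflat ↦
    hmax e he.2 ⟨hflat, hB.indep.subset (insert_subset he.1 hSB)⟩
  have hcount' : (B \ S).ncard ≤ (M.E \ B).ncard :=
    ENat.toNat_le_toNat hcount hfin.sdiff.encard_lt_top.ne
  have hBS : (B \ S).ncard = B.ncard - S.ncard :=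
    ncard_sdiff hSB (hfin.subset hS.1.subset_ground)
  have hEB : (M.E \ B).ncard + B.ncard = M.E.ncard :=
    ncard_sdiff_add_ncard_of_subset hB.subset_ground hfin
  have hBr : B.ncard = B₀.ncard := hB.ncard_eq_ncard_of_isBase hB₀
  omega

/-- For `r ≥ t ≥ 1`, a finite loopless matroid of rank `r` with no `(t+1)`-claw
has at least `2r − t` elements. -/
theorem loopless_claw_free_lower_bound {α : Type*} (r t : ℕ) (ht : 1 ≤ t) (hrt : t ≤ r)
    (M : Matroid α) (hfin : M.E.Finite) (hloopless : M.IsLoopless)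
    (hrank : ∃ B, M.IsBase B ∧ B.ncard = r)
    (hclaw : ¬ ∃ S, M.IsClaw S ∧ S.ncard = t + 1) :
    2 * r - t ≤ M.E.ncard :=
  loopless_claw_free_lower_bound_general r t M hfin hloopless hrank hclaw
end

section
/- Let t ≥ 1 be an integer and let M be a simple matroid. Suppose Z is a flat of M of rank t + 1 such that Z is finite with at most t + 2 elements. Then M has a t-claw, i.e., a t-element set that is both a flat of M and independent in M. -/
/-- A matroid is *simple* if every one- or two-element subset of the ground set
is independent (equivalently: it is loopless and has no two distinct parallel elements). -/
def Matroid.IsSimple {α : Type*} (M : Matroid α) : Prop :=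
  ∀ e ∈ M.E, ∀ f ∈ M.E, M.Indep {e, f}

/-!
Let `I` be a basis of `Z`. If `Z = I`, then `I \ {e}` is a flat for any `e ∈ I`. Otherwise
`Z = I ∪ {z}`, and `z` is not a loop, so its fundamental circuit in `I ∪ {z}` contains some
`e ∈ I`; exchanging shows `z ∉ cl (I \ {e})`, and again `I \ {e}` is a flat of size `t`.
-/

namespace Matroid

variable {α : Type*} {M : Matroid α} {I : Set α} {e z : α}

lemma IsSimple.isNonloop (hM : M.IsSimple) (he : e ∈ M.E) : M.IsNonloop e := by
  simpa [indep_singleton] using hM e he e he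

lemma Indep.isFlat_sdiff_singleton_of_closure_subset (hI : M.Indep I) (he : e ∈ I)
    (h : M.closure (I \ {e}) ⊆ I) : M.IsFlat (I \ {e}) := by
  refine isFlat_iff_closure_eq.2 <| subset_antisymm (fun x hx ↦ ⟨h hx, ?_⟩)
    (M.subset_closure _ (hI.subset Set.sdiff_subset).subset_ground)
  rintro rfl
  exact hI.notMem_closure_sdiff_of_mem he hx

lemma Indep.exists_notMem_closure_sdiff_singleton (hI : M.Indep I) (hz : z ∈ M.closure I)
    (hnl : M.IsNonloop z) : ∃ e ∈ I, z ∉ M.closure (I \ {e}) := by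
  by_cases hzI : z ∈ I
  · exact ⟨z, hzI, hI.notMem_closure_sdiff_of_mem hzI⟩
  have hC := hI.fundCircuit_isCircuit hz hzI
  obtain ⟨e, heC, hez⟩ : ∃ e ∈ M.fundCircuit z I, e ≠ z := by
    by_contra! h
    have hCz : M.fundCircuit z I = {z} :=
      Set.eq_singleton_iff_unique_mem.2 ⟨M.mem_fundCircuit z I, h⟩
    exact hnl.not_isLoop (singleton_isCircuit.1 (hCz ▸ hC))
  have heI : e ∈ I :=
    (Set.mem_insert_iff.1 (M.fundCircuit_subset_insert z I heC)).resolve_left hez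
  refine ⟨e, heI, fun hzcl ↦ hI.notMem_closure_sdiff_of_mem heI ?_⟩
  -- `e` lies in the closure of the rest of its circuit, which `z` does not enlarge.
  rw [← closure_insert_eq_of_mem_closure hzcl]
  refine M.closure_subset_closure ?_ (hC.mem_closure_sdiff_singleton_of_mem heC)
  exact (Set.sdiff_subset_sdiff_left (M.fundCircuit_subset_insert z I)).trans
    (Set.insert_sdiff_of_notMem _ (Set.notMem_singleton_iff.2 hez.symm)).subset

end Matroid

theorem t_claw_of_small_flat_general {α : Type*} (t : ℕ) (M : Matroid α)
    (hsimple : M.IsSimple) (Z : Set α) (hZflat : M.IsFlat Z) (hZfin : Z.Finite)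
    (hZrank : ∃ I, M.IsBasis I Z ∧ I.ncard = t + 1)
    (hZcard : Z.ncard ≤ t + 2) :
    ∃ S, M.IsClaw S ∧ S.ncard = t := by
  obtain ⟨I, hI, hIcard⟩ := hZrank
  have hIfin : I.Finite := Set.finite_of_ncard_pos (by omega)
  have hclI : M.closure I = Z := by rw [hI.closure_eq_closure, hZflat.closure]
  have hZI : (Z \ I).ncard ≤ 1 := by rw [Set.ncard_sdiff hI.subset hIfin]; omega
  obtain ⟨e, heI, hcl⟩ : ∃ e ∈ I, M.closure (I \ {e}) ⊆ I := by
    rcases (Set.ncard_le_one_iff_eq hZfin.sdiff).1 hZI with hZI | ⟨z, hZI⟩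
    · obtain ⟨e, heI⟩ := Set.nonempty_of_ncard_ne_zero (s := I) (by omega)
      refine ⟨e, heI, (M.closure_subset_closure Set.sdiff_subset).trans ?_⟩
      rwa [hclI, ← Set.sdiff_eq_empty]
    · have hzZ : z ∈ Z := (hZI.symm.subset rfl).1
      obtain ⟨e, heI, hze⟩ := hI.indep.exists_notMem_closure_sdiff_singleton (hclI ▸ hzZ)
        (hsimple.isNonloop (hZflat.subset_ground hzZ))
      refine ⟨e, heI, fun x hx ↦ by_contra fun hxI ↦ hze ?_⟩
      have hxZ : x ∈ Z := hclI ▸ M.closure_subset_closure Set.sdiff_subset hx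
      rwa [← Set.mem_singleton_iff.1 (hZI ▸ ⟨hxZ, hxI⟩ : x ∈ ({z} : Set α))]
  refine ⟨I \ {e}, ⟨hI.indep.isFlat_sdiff_singleton_of_closure_subset heI hcl,
    hI.indep.subset Set.sdiff_subset⟩, ?_⟩
  rw [Set.ncard_sdiff_singleton_of_mem heI, hIcard, Nat.add_sub_cancel]

/-- If a simple matroid has a finite rank-`(t+1)` flat with at most `t+2` elements
(`t ≥ 1`), then it has a `t`-claw. -/
theorem t_claw_of_small_flat {α : Type*} (t : ℕ) (ht : 1 ≤ t) (M : Matroid α)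
    (hsimple : M.IsSimple) (Z : Set α) (hZflat : M.IsFlat Z) (hZfin : Z.Finite)
    (hZrank : ∃ I, M.IsBasis I Z ∧ I.ncard = t + 1)
    (hZcard : Z.ncard ≤ t + 2) :
    ∃ S, M.IsClaw S ∧ S.ncard = t :=
  t_claw_of_small_flat_general t M hsimple Z hZflat hZfin hZrank hZcard
end

section
/- Let n ≥ 1 and t ≥ 1 be integers with n < 4t, and let G be a simple graph on n vertices such that for every set S of 2t+1 vertices the induced subgraph G[S] is not acyclic, and suppose the number of edges of G equals g(n,t). Then every connected component of G is a complete graph on 1, 3, or 4 vertices; that is, any two distinct vertices in the same connected component are adjacent, and every connected component has exactly 1, 3, or 4 vertices. -/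
/-- The extremal function `g(n,t)`: `g(n,t) = 0` for `n < 2t`, `g(n,t) = 3(n − 2t)` for
`2t ≤ n ≤ 4t`, and `g(n,t) = g(n−1,t) + ⌈n/t⌉ − 1` for `n > 4t`. -/
def g (t : ℕ) : ℕ → ℕ
  | 0 => 0
  | n + 1 =>
    if n + 1 < 2 * t then 0
    else if n + 1 ≤ 4 * t then 3 * (n + 1 - 2 * t)
    else g t n + (n + 1 + t - 1) / t - 1

/-!
Write `e(s)` for the number of edges of `G[s]` and call `s` extremal when no induced forest in
`s` has more than `|s| - e(s)/3` vertices. By induction on `|s|`, some induced forest has at least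
that many vertices, and an extremal `s` induces a disjoint union of `K₁`s, `K₃`s and `K₄`s.

If `G[s]` is a forest there is nothing to do. Deleting a vertex `v` of degree `d ≥ 3` costs at
most one forest vertex and removes `d` edges; extremality forces `d = 3` and `s - v` extremal.
Then either the neighbours of `v` form a triangle component, which `v` completes to a `K₄`, or
keeping two vertices of every other clique, at most one of them adjacent to `v`, gives a maximum
forest of `s - v` that `v` extends. If all degrees are at most two, some cycle `C` is a component;
deleting it costs `|C| - 1` forest vertices and `|C| ≥ 3` edges, and extremality forces `|C| = 3`.

For `n < 4t` we have `g(n,t) = 3(n - 2t)`, so a graph with `g(n,t)` edges and no induced forest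
on `2t + 1` vertices is extremal.
-/

open Finset

lemma Finset.exists_subset_card_eq_min_two_inter_le_one {V : Type*} [DecidableEq V]
    {K B : Finset V} (hK : #K ≤ 1 ∨ ¬ K ⊆ B) : ∃ P ⊆ K, #P = min 2 #K ∧ #(P ∩ B) ≤ 1 := by
  rcases hK with hK | hK
  · exact ⟨K, Subset.rfl, by omega, (card_le_card inter_subset_left).trans hK⟩
  obtain ⟨x, hxK, hxB⟩ := not_subset.1 hK
  obtain ⟨Q, hQ, hQcard⟩ := exists_subset_card_eq (s := K.erase x) (n := min 2 #K - 1)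
    (by rw [card_erase_of_mem hxK]; omega)
  have hxQ : x ∉ Q := fun h => (mem_erase.1 (hQ h)).1 rfl
  refine ⟨insert x Q, insert_subset hxK (hQ.trans (erase_subset x K)), ?_, ?_⟩
  · have := card_pos.2 ⟨x, hxK⟩
    rw [card_insert_of_notMem hxQ]
    omega
  · have hsub : insert x Q ∩ B ⊆ Q := fun y hy => by
      obtain ⟨hyxQ, hyB⟩ := mem_inter.1 hy
      exact (mem_insert.1 hyxQ).resolve_left fun h => hxB (h ▸ hyB)
    have := card_le_card hsub
    omega

namespace SimpleGraph

variable {V : Type*} {G : SimpleGraph V}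

lemma Walk.IsCycle.exists_adj_ne {u v : V} {c : G.Walk u u} (hc : c.IsCycle)
    (hv : v ∈ c.support) :
    ∃ x y, x ≠ y ∧ G.Adj v x ∧ G.Adj v y ∧ x ∈ c.support ∧ y ∈ c.support := by
  obtain ⟨x, y, hxy, hnbr⟩ := Set.ncard_eq_two.1 (hc.ncard_neighborSet_toSubgraph_eq_two hv)
  have hx : c.toSubgraph.Adj v x := by simp [← Subgraph.mem_neighborSet, hnbr]
  have hy : c.toSubgraph.Adj v y := by simp [← Subgraph.mem_neighborSet, hnbr]
  exact ⟨x, y, hxy, hx.adj_sub, hy.adj_sub, c.mem_verts_toSubgraph.1 hx.snd_mem,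
    c.mem_verts_toSubgraph.1 hy.snd_mem⟩

/-- `t` is a union of connected components of `G[s]`. -/
def IsAdjClosed (G : SimpleGraph V) (s t : Finset V) : Prop :=
  ∀ a ∈ t, ∀ b ∈ s, G.Adj a b → b ∈ t

lemma IsAdjClosed.sdiff [DecidableEq V] {s t : Finset V} (h : G.IsAdjClosed s t) :
    G.IsAdjClosed s (s \ t) := fun a ha b hb hab =>
  mem_sdiff.2 ⟨hb, fun hbt => (mem_sdiff.1 ha).2 (h b hbt a (mem_sdiff.1 ha).1 hab.symm)⟩

lemma Walk.support_subset_of_isAdjClosed {s t : Finset V} (ht : G.IsAdjClosed s t) :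
    ∀ {u w : V} (p : G.Walk u w), u ∈ t → (∀ x ∈ p.support, x ∈ s) → ∀ x ∈ p.support, x ∈ t
  | _, _, .nil, hu, _, x, hx => by simp_all
  | _, _, .cons hadj p, hu, hs, x, hx => by
    simp only [support_cons, List.mem_cons, forall_eq_or_imp] at hs hx
    rcases hx with rfl | hx
    · exact hu
    · exact p.support_subset_of_isAdjClosed ht (ht _ hu _ (hs.2 _ p.start_mem_support) hadj)
        hs.2 x hx

def IsAcyclicOn (G : SimpleGraph V) (s : Finset V) : Prop :=
  ∀ ⦃v : V⦄ (c : G.Walk v v), c.IsCycle → ∃ x ∈ c.support, x ∉ s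

lemma IsAcyclicOn.mono {s t : Finset V} (h : G.IsAcyclicOn s) (hts : t ⊆ s) :
    G.IsAcyclicOn t := fun _ c hc =>
  let ⟨x, hx, hxs⟩ := h c hc
  ⟨x, hx, fun hxt => hxs (hts hxt)⟩

lemma IsAcyclicOn.union [DecidableEq V] {A B : Finset V} (hA : G.IsAcyclicOn A)
    (hB : G.IsAcyclicOn B) (hAB : ∀ a ∈ A, ∀ b ∈ B, ¬ G.Adj a b) :
    G.IsAcyclicOn (A ∪ B) := by
  intro v c hc
  by_contra! hc_sub
  have hclosedA : G.IsAdjClosed (A ∪ B) A := fun a ha b hb hab =>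
    (mem_union.1 hb).resolve_right fun hbB => hAB a ha b hbB hab
  have hclosedB : G.IsAdjClosed (A ∪ B) B := fun b hb a ha hba =>
    (mem_union.1 ha).resolve_left fun haA => hAB a haA b hb hba.symm
  rcases mem_union.1 (hc_sub v c.start_mem_support) with hv | hv
  · obtain ⟨x, hx, hxA⟩ := hA c hc
    exact hxA (c.support_subset_of_isAdjClosed hclosedA hv hc_sub x hx)
  · obtain ⟨x, hx, hxB⟩ := hB c hc
    exact hxB (c.support_subset_of_isAdjClosed hclosedB hv hc_sub x hx)

/-- A vertex of a cycle minimizing `f` has two neighbours `w` on the cycle with `f u ≤ f w`. -/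
lemma isAcyclicOn_of_rank [DecidableEq V] [DecidableRel G.Adj] {A : Finset V} (f : V → ℕ)
    (hf : ∀ u ∈ A, #{w ∈ A | G.Adj u w ∧ f u ≤ f w} ≤ 1) : G.IsAcyclicOn A := by
  intro v c hc
  by_contra! hc_sub
  obtain ⟨u, hu, hmin⟩ :=
    c.support.toFinset.exists_min_image f ⟨v, List.mem_toFinset.2 c.start_mem_support⟩
  rw [List.mem_toFinset] at hu
  obtain ⟨x, y, hxy, hux, huy, hx, hy⟩ := hc.exists_adj_ne hu
  have htwo : 1 < #{w ∈ A | G.Adj u w ∧ f u ≤ f w} :=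
    one_lt_card.2 ⟨x, by simp [hc_sub x hx, hux, hmin x (List.mem_toFinset.2 hx)],
      y, by simp [hc_sub y hy, huy, hmin y (List.mem_toFinset.2 hy)], hxy⟩
  exact (hf u (hc_sub u hu)).not_gt htwo

lemma IsAcyclicOn.isAcyclic_induce {s : Finset V} (h : G.IsAcyclicOn s) :
    (G.induce (s : Set V)).IsAcyclic := by
  intro v c hc
  have hinj : Function.Injective (Embedding.induce (G := G) (s : Set V)).toHom :=
    (Embedding.induce (G := G) (s : Set V)).injective
  obtain ⟨x, hx, hxs⟩ := h _ (hc.map hinj)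
  rw [Walk.support_map, List.mem_map] at hx
  obtain ⟨a, -, rfl⟩ := hx
  exact hxs a.2

section Degrees

variable [DecidableRel G.Adj] {s t : Finset V} {u v : V}

variable (G) in
def degreeOn (s : Finset V) (v : V) : ℕ := #{w ∈ s | G.Adj v w}

variable (G) in
/-- Twice the number of edges of `G[s]`. -/
def degreeSumOn (s : Finset V) : ℕ := ∑ u ∈ s, G.degreeOn s u

lemma degreeOn_of_isAdjClosed (hts : t ⊆ s) (ht : G.IsAdjClosed s t) (hu : u ∈ t) :
    G.degreeOn t u = G.degreeOn s u := by
  unfold degreeOn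
  congr 1
  ext w
  simp only [mem_filter]
  exact ⟨fun ⟨hw, hadj⟩ => ⟨hts hw, hadj⟩, fun ⟨hw, hadj⟩ => ⟨ht u hu w hw hadj, hadj⟩⟩

lemma degreeSumOn_of_isAdjClosed [DecidableEq V] (hts : t ⊆ s) (ht : G.IsAdjClosed s t) :
    G.degreeSumOn s = G.degreeSumOn t + G.degreeSumOn (s \ t) := by
  unfold degreeSumOn
  rw [← sum_sdiff hts, add_comm]
  congr 1
  · exact sum_congr rfl fun u hu => (degreeOn_of_isAdjClosed hts ht hu).symm
  · exact sum_congr rfl fun u hu =>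
      (degreeOn_of_isAdjClosed sdiff_subset ht.sdiff hu).symm

lemma degreeOn_insert [DecidableEq V] (hv : v ∉ s) :
    G.degreeOn (insert v s) u = G.degreeOn s u + if G.Adj u v then 1 else 0 := by
  unfold degreeOn
  rw [filter_insert]
  split_ifs with h
  · exact card_insert_of_notMem fun hm => hv (mem_filter.1 hm).1
  · rfl

lemma degreeOn_insert_self [DecidableEq V] : G.degreeOn (insert v s) v = G.degreeOn s v := by
  unfold degreeOn
  rw [filter_insert, if_neg (G.irrefl)]

lemma degreeSumOn_insert [DecidableEq V] (hv : v ∉ s) :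
    G.degreeSumOn (insert v s) = G.degreeSumOn s + 2 * G.degreeOn s v := by
  have hback : ∑ u ∈ s, (if G.Adj u v then 1 else 0) = G.degreeOn s v := by
    rw [← card_filter, degreeOn]
    simp_rw [G.adj_comm]
  unfold degreeSumOn
  rw [sum_insert hv, degreeOn_insert_self, sum_congr rfl fun u _ => degreeOn_insert hv,
    sum_add_distrib, hback]
  ring

lemma degreeSumOn_univ [Fintype V] [DecidableEq V] :
    G.degreeSumOn univ = 2 * #G.edgeFinset := by
  rw [← sum_degrees_eq_twice_card_edges, degreeSumOn]
  refine sum_congr rfl fun v _ => ?_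
  rw [← card_neighborFinset_eq_degree, neighborFinset_eq_filter, degreeOn]

end Degrees

section Clusters

variable {s t : Finset V} {u v w : V}

variable (G) in
/-- `G[s]` is a disjoint union of cliques. -/
def IsClusterOn (s : Finset V) : Prop :=
  ∀ a ∈ s, ∀ b ∈ s, ∀ c ∈ s, G.Adj a b → G.Adj a c → b ≠ c → G.Adj b c

lemma IsClusterOn.adj_of_walk [Fintype V] (h : G.IsClusterOn univ) :
    ∀ {u w : V}, G.Walk u w → u ≠ w → G.Adj u w
  | _, _, .nil, hne => absurd rfl hne
  | _, w, .cons (v := x) hux p, hne => by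
    by_cases hxw : x = w
    · exact hxw ▸ hux
    · exact h x (mem_univ _) _ (mem_univ _) w (mem_univ _) hux.symm (h.adj_of_walk p hxw) hne

variable [DecidableRel G.Adj]

variable (G) in
/-- `G[s]` is a disjoint union of copies of `K₁`, `K₃` and `K₄`. -/
def IsCluster134On (s : Finset V) : Prop :=
  G.IsClusterOn s ∧ ∀ u ∈ s, G.degreeOn s u = 0 ∨ G.degreeOn s u = 2 ∨ G.degreeOn s u = 3

lemma isCluster134On_of_degreeSumOn_eq_zero (h : G.degreeSumOn s = 0) : G.IsCluster134On s := by
  have hdeg : ∀ u ∈ s, G.degreeOn s u = 0 := sum_eq_zero_iff.1 h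
  refine ⟨fun a ha b hb _ _ hab _ _ => ?_, fun u hu => Or.inl (hdeg u hu)⟩
  have hpos : 0 < G.degreeOn s a := card_pos.2 ⟨b, mem_filter.2 ⟨hb, hab⟩⟩
  exact absurd (hdeg a ha) hpos.ne'

variable [DecidableEq V]

variable (G) in
def closedNbhdOn (s : Finset V) (u : V) : Finset V := insert u {w ∈ s | G.Adj u w}

lemma mem_closedNbhdOn : w ∈ G.closedNbhdOn s u ↔ w = u ∨ w ∈ s ∧ G.Adj u w := by
  simp [closedNbhdOn]

lemma self_mem_closedNbhdOn : u ∈ G.closedNbhdOn s u := mem_insert_self _ _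

lemma card_closedNbhdOn : #(G.closedNbhdOn s u) = G.degreeOn s u + 1 :=
  card_insert_of_notMem fun h => G.irrefl (mem_filter.1 h).2

lemma closedNbhdOn_subset (hu : u ∈ s) : G.closedNbhdOn s u ⊆ s :=
  insert_subset hu (filter_subset _ _)

lemma IsClique.closedNbhdOn_eq (h : G.IsClique (s : Set V)) (hu : u ∈ s) :
    G.closedNbhdOn s u = s := by
  ext w
  rw [mem_closedNbhdOn]
  refine ⟨fun hw => hw.elim (· ▸ hu) And.left, fun hw => ?_⟩
  by_cases hwu : w = u
  · exact Or.inl hwu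
  · exact Or.inr ⟨hw, h hu hw (Ne.symm hwu)⟩

lemma isClique_of_forall_degreeOn (h : ∀ u ∈ s, G.degreeOn s u + 1 = #s) :
    G.IsClique (s : Set V) := by
  intro a ha b hb hab
  have hfull : G.closedNbhdOn s a = s :=
    eq_of_subset_of_card_le (closedNbhdOn_subset ha) (by rw [card_closedNbhdOn, h a ha])
  rw [mem_coe, ← hfull, mem_closedNbhdOn] at hb
  exact (hb.resolve_left (Ne.symm hab)).2

lemma IsClusterOn.closedNbhdOn_subset_of_adj (h : G.IsClusterOn s) (hu : u ∈ s) (hw : w ∈ s)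
    (huw : G.Adj u w) : G.closedNbhdOn s u ⊆ G.closedNbhdOn s w := by
  intro x hx
  rw [mem_closedNbhdOn] at hx ⊢
  rcases hx with rfl | ⟨hx, hux⟩
  · exact Or.inr ⟨hu, huw.symm⟩
  · by_cases hxw : x = w
    · exact Or.inl hxw
    · exact Or.inr ⟨hx, h u hu w hw x hx huw hux (Ne.symm hxw)⟩

lemma IsClusterOn.closedNbhdOn_eq (h : G.IsClusterOn s) (hu : u ∈ s)
    (hw : w ∈ G.closedNbhdOn s u) : G.closedNbhdOn s w = G.closedNbhdOn s u := by
  rcases mem_closedNbhdOn.1 hw with rfl | ⟨hw, huw⟩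
  · rfl
  · exact (h.closedNbhdOn_subset_of_adj hw hu huw.symm).antisymm
      (h.closedNbhdOn_subset_of_adj hu hw huw)

lemma IsClusterOn.isClique_closedNbhdOn (h : G.IsClusterOn s) (hu : u ∈ s) :
    G.IsClique (G.closedNbhdOn s u : Set V) := by
  intro a ha b hb hab
  rw [mem_coe, mem_closedNbhdOn] at ha hb
  rcases ha with rfl | ⟨ha, hua⟩ <;> rcases hb with rfl | ⟨hb, hub⟩
  · exact absurd rfl hab
  · exact hub
  · exact hua.symm
  · exact h u hu a ha b hb hua hub hab

lemma IsClusterOn.isAdjClosed_closedNbhdOn (h : G.IsClusterOn s) (hu : u ∈ s) :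
    G.IsAdjClosed s (G.closedNbhdOn s u) := fun a ha b hb hab => by
  rw [← h.closedNbhdOn_eq hu ha]
  exact mem_closedNbhdOn.2 (Or.inr ⟨hb, hab⟩)

/-- The closed neighbourhoods of a cluster partition it into its cliques. -/
lemma IsClusterOn.sum_eq_mul_card (h : G.IsClusterOn s) (φ : V → ℕ) (c : ℕ)
    (hφ : ∀ u ∈ s, ∑ w ∈ G.closedNbhdOn s u, φ w = c * #(G.closedNbhdOn s u)) :
    ∑ u ∈ s, φ u = c * #s := by
  have hfiber : ∀ K ∈ s.image (G.closedNbhdOn s), {u ∈ s | G.closedNbhdOn s u = K} = K := by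
    simp only [mem_image]
    rintro K ⟨z, hz, rfl⟩
    ext w
    rw [mem_filter]
    exact ⟨fun ⟨_, hwK⟩ => hwK ▸ self_mem_closedNbhdOn,
      fun hw => ⟨closedNbhdOn_subset hz hw, h.closedNbhdOn_eq hz hw⟩⟩
  have hsum (ψ : V → ℕ) : ∑ u ∈ s, ψ u = ∑ K ∈ s.image (G.closedNbhdOn s), ∑ u ∈ K, ψ u := by
    rw [← sum_fiberwise_of_maps_to (g := G.closedNbhdOn s) fun u hu => mem_image_of_mem _ hu]
    exact sum_congr rfl fun K hK => by rw [hfiber K hK]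
  rw [hsum φ, card_eq_sum_ones, hsum fun _ => 1, mul_sum]
  refine sum_congr rfl fun K hK => ?_
  obtain ⟨z, hz, rfl⟩ := mem_image.1 hK
  rw [hφ z hz, card_eq_sum_ones]

lemma isCluster134On_iff_of_isAdjClosed (hts : t ⊆ s) (ht : G.IsAdjClosed s t) :
    G.IsCluster134On s ↔ G.IsCluster134On t ∧ G.IsCluster134On (s \ t) := by
  have hdeg_t {u} (hu : u ∈ t) := degreeOn_of_isAdjClosed hts ht hu
  have hdeg_st {u} (hu : u ∈ s \ t) := degreeOn_of_isAdjClosed sdiff_subset ht.sdiff hu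
  constructor
  · rintro ⟨hcl, hdeg⟩
    refine ⟨⟨fun a ha b hb c hc => hcl a (hts ha) b (hts hb) c (hts hc), fun u hu => ?_⟩,
      ⟨fun a ha b hb c hc => hcl a (sdiff_subset ha) b (sdiff_subset hb) c (sdiff_subset hc),
        fun u hu => ?_⟩⟩
    · rw [hdeg_t hu]; exact hdeg u (hts hu)
    · rw [hdeg_st hu]; exact hdeg u (sdiff_subset hu)
  · rintro ⟨⟨hcl_t, hdeg_t'⟩, ⟨hcl_st, hdeg_st'⟩⟩
    refine ⟨fun a ha b hb c hc hab hac hbc => ?_, fun u hu => ?_⟩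
    · by_cases hat : a ∈ t
      · exact hcl_t a hat b (ht a hat b hb hab) c (ht a hat c hc hac) hab hac hbc
      · have has : a ∈ s \ t := mem_sdiff.2 ⟨ha, hat⟩
        exact hcl_st a has b (ht.sdiff a has b hb hab) c (ht.sdiff a has c hc hac) hab hac hbc
    · by_cases hut : u ∈ t
      · rw [← hdeg_t hut]; exact hdeg_t' u hut
      · have hus : u ∈ s \ t := mem_sdiff.2 ⟨hu, hut⟩
        rw [← hdeg_st hus]; exact hdeg_st' u hus

lemma isCluster134On_of_isClique (h : G.IsClique (s : Set V)) (hs : #s = 1 ∨ #s = 3 ∨ #s = 4) :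
    G.IsCluster134On s := by
  refine ⟨fun a _ b hb c hc _ _ hbc => h hb hc hbc, fun u hu => ?_⟩
  have hdeg := h.closedNbhdOn_eq hu ▸ (card_closedNbhdOn (G := G) (s := s) (u := u))
  omega

lemma IsClusterOn.supp_connectedComponentMk [Fintype V] (h : G.IsClusterOn univ) (v : V) :
    (G.connectedComponentMk v).supp = G.closedNbhdOn univ v := by
  ext w
  rw [ConnectedComponent.mem_supp_iff, ConnectedComponent.eq, mem_coe, mem_closedNbhdOn]
  refine ⟨fun ⟨p⟩ => ?_, ?_⟩
  · by_cases hwv : w = v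
    · exact Or.inl hwv
    · exact Or.inr ⟨mem_univ w, (h.adj_of_walk p hwv).symm⟩
  · rintro (rfl | ⟨-, hvw⟩)
    exacts [Reachable.refl w, hvw.symm.reachable]

end Clusters

section Picking

variable [DecidableEq V] [DecidableRel G.Adj] {s : Finset V} {u v w z : V}
  {P : Finset V → Finset V}

variable (G) in
def pickedOn (s : Finset V) (P : Finset V → Finset V) : Finset V :=
  {u ∈ s | u ∈ P (G.closedNbhdOn s u)}

lemma IsClusterOn.mem_of_mem_pickedOn_of_adj (hs : G.IsClusterOn s) (hu : u ∈ s)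
    (hw : w ∈ G.pickedOn s P) (huw : G.Adj u w) : w ∈ P (G.closedNbhdOn s u) := by
  obtain ⟨hws, hwP⟩ := mem_filter.1 hw
  rwa [← hs.closedNbhdOn_eq hu (mem_closedNbhdOn.2 (Or.inr ⟨hws, huw⟩))]

lemma IsCluster134On.card_pickedOn (hs : G.IsCluster134On s)
    (hP : ∀ z ∈ s, P (G.closedNbhdOn s z) ⊆ G.closedNbhdOn s z ∧
      #(P (G.closedNbhdOn s z)) = min 2 #(G.closedNbhdOn s z)) :
    6 * #(G.pickedOn s P) + G.degreeSumOn s = 6 * #s := by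
  rw [pickedOn, card_filter, mul_sum, degreeSumOn, ← sum_add_distrib]
  refine hs.1.sum_eq_mul_card _ 6 fun z hz => ?_
  set K := G.closedNbhdOn s z
  have hcard : #K = G.degreeOn s z + 1 := card_closedNbhdOn
  have hterm : ∀ w ∈ K, 6 * (if w ∈ P (G.closedNbhdOn s w) then 1 else 0) + G.degreeOn s w =
      (if w ∈ P K then 6 else 0) + (#K - 1) := fun w hw => by
    have hNw : G.closedNbhdOn s w = K := hs.1.closedNbhdOn_eq hz hw
    have hdeg : #K = G.degreeOn s w + 1 := hNw ▸ card_closedNbhdOn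
    rw [hNw]
    split_ifs <;> omega
  rw [sum_congr rfl hterm, sum_add_distrib, sum_ite_mem, inter_eq_right.2 (hP z hz).1,
    sum_const, sum_const, smul_eq_mul, smul_eq_mul, (hP z hz).2, hcard]
  rcases hs.2 z hz with h | h | h <;> simp [h]

/-- Ranking `v` above its neighbours and these above everything else, each vertex has at most
one neighbour of larger or equal rank in the graph induced on `v` and the picked vertices. -/
lemma IsClusterOn.isAcyclicOn_insert_pickedOn (hs : G.IsClusterOn s) (hv : v ∉ s)
    (hP : ∀ z ∈ s, #(P (G.closedNbhdOn s z)) ≤ 2 ∧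
      #(P (G.closedNbhdOn s z) ∩ {w ∈ s | G.Adj v w}) ≤ 1) :
    G.IsAcyclicOn (insert v (G.pickedOn s P)) := by
  set rank : V → ℕ := fun u => if u = v then 2 else if G.Adj v u then 1 else 0
  refine isAcyclicOn_of_rank rank fun u hu => ?_
  rcases mem_insert.1 hu with rfl | huT
  · refine card_le_one.2 fun a ha _ _ => ?_
    obtain ⟨-, hua, hle⟩ := mem_filter.1 ha
    simp [rank, hua, hua.ne'] at hle
  obtain ⟨hus, huP⟩ := mem_filter.1 huT
  have huv : u ≠ v := fun h => hv (h ▸ hus)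
  by_cases hvu : G.Adj v u
  · have hsub : {w ∈ insert v (G.pickedOn s P) | G.Adj u w ∧ rank u ≤ rank w} ⊆ {v} :=
      fun w hw => by
        obtain ⟨hwT, huw, hle⟩ := mem_filter.1 hw
        refine mem_singleton.2 ((mem_insert.1 hwT).resolve_right fun hwT' => ?_)
        have hws : w ∈ s := (mem_filter.1 hwT').1
        have hvw : G.Adj v w := by
          by_contra hvw
          have hwv : w ≠ v := fun h => hv (h ▸ hws)
          simp [rank, huv, hvu, hwv, hvw] at hle
        have hwB : w ∈ P (G.closedNbhdOn s u) ∩ {w ∈ s | G.Adj v w} :=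
          mem_inter.2 ⟨hs.mem_of_mem_pickedOn_of_adj hus hwT' huw, mem_filter.2 ⟨hws, hvw⟩⟩
        have huB : u ∈ P (G.closedNbhdOn s u) ∩ {w ∈ s | G.Adj v w} :=
          mem_inter.2 ⟨huP, mem_filter.2 ⟨hus, hvu⟩⟩
        exact (hP u hus).2.not_gt (one_lt_card.2 ⟨u, huB, w, hwB, huw.ne⟩)
    exact (card_le_card hsub).trans (card_singleton v).le
  · have hsub : {w ∈ insert v (G.pickedOn s P) | G.Adj u w ∧ rank u ≤ rank w} ⊆
        (P (G.closedNbhdOn s u)).erase u := fun w hw => by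
      obtain ⟨hwT, huw, -⟩ := mem_filter.1 hw
      rcases mem_insert.1 hwT with rfl | hwT
      · exact absurd huw.symm hvu
      · exact mem_erase.2 ⟨huw.ne', hs.mem_of_mem_pickedOn_of_adj hus hwT huw⟩
    have := card_le_card hsub
    rw [card_erase_of_mem huP] at this
    have := (hP u hus).1
    omega

lemma IsCluster134On.insert_of_closedNbhdOn_eq (hs : G.IsCluster134On s) (hv : v ∉ s)
    (hz : z ∈ s) (hB : G.closedNbhdOn s z = {w ∈ s | G.Adj v w}) (h3 : G.degreeOn s v = 3) :
    G.IsCluster134On (insert v s) := by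
  set K := G.closedNbhdOn s z
  have hKs : K ⊆ s := closedNbhdOn_subset hz
  have hK : G.IsAdjClosed s K := hs.1.isAdjClosed_closedNbhdOn hz
  have hvK : G.IsAdjClosed (insert v s) (insert v K) := fun a ha b hb hab => by
    rcases mem_insert.1 ha with rfl | ha
    · exact mem_insert_of_mem (hB ▸ mem_filter.2 ⟨(mem_insert.1 hb).resolve_left hab.ne', hab⟩)
    · rcases mem_insert.1 hb with rfl | hb
      · exact mem_insert_self _ _
      · exact mem_insert_of_mem (hK a ha b hb hab)
  have hclique : G.IsClique ((insert v K : Finset V) : Set V) := by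
    rw [coe_insert]
    exact (hs.1.isClique_closedNbhdOn hz).insert fun b hb _ =>
      (mem_filter.1 (hB ▸ (mem_coe.1 hb : b ∈ K))).2
  have hcard : #(insert v K) = 4 := by
    rw [card_insert_of_notMem fun h => hv (hKs h), hB]
    exact congrArg (· + 1) h3
  have hrest : insert v s \ insert v K = s \ K := by
    ext w
    simp only [mem_sdiff, mem_insert]
    constructor
    · rintro ⟨hw | hw, hwK⟩ <;> simp_all
    · rintro ⟨hw, hwK⟩
      exact ⟨Or.inr hw, by rintro (rfl | h) <;> contradiction⟩
  refine (isCluster134On_iff_of_isAdjClosed (insert_subset_insert v hKs) hvK).2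
    ⟨isCluster134On_of_isClique hclique (by omega), ?_⟩
  rw [hrest]
  exact ((isCluster134On_iff_of_isAdjClosed hKs hK).1 hs).2

lemma IsCluster134On.exists_isAcyclicOn_insert (hs : G.IsCluster134On s) (hv : v ∉ s)
    (hB : ∀ z ∈ s, 2 ≤ G.degreeOn s z → ¬ G.closedNbhdOn s z ⊆ {w ∈ s | G.Adj v w}) :
    ∃ T ⊆ s, G.IsAcyclicOn (insert v T) ∧ 6 * #T + G.degreeSumOn s = 6 * #s := by
  set B := {w ∈ s | G.Adj v w}
  have hpick (K : Finset V) :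
      ∃ P ⊆ K, (#K ≤ 1 ∨ ¬ K ⊆ B) → #P = min 2 #K ∧ #(P ∩ B) ≤ 1 := by
    by_cases hK : #K ≤ 1 ∨ ¬ K ⊆ B
    · obtain ⟨P, hPK, hP⟩ := exists_subset_card_eq_min_two_inter_le_one hK
      exact ⟨P, hPK, fun _ => hP⟩
    · exact ⟨∅, empty_subset K, fun h => absurd h hK⟩
  choose P hPK hP using hpick
  have hPz (z) (hz : z ∈ s) := hP (G.closedNbhdOn s z) (by
    rw [card_closedNbhdOn]
    by_cases h2 : 2 ≤ G.degreeOn s z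
    · exact Or.inr (hB z hz h2)
    · exact Or.inl (by have := hs.2 z hz; omega))
  refine ⟨G.pickedOn s P, filter_subset _ s, hs.1.isAcyclicOn_insert_pickedOn hv fun z hz => ?_,
    hs.card_pickedOn fun z hz => ⟨hPK _, (hPz z hz).1⟩⟩
  exact ⟨(hPz z hz).1 ▸ min_le_left _ _, (hPz z hz).2⟩

end Picking

section CycleComponents

variable [DecidableEq V] [DecidableRel G.Adj] {s C F : Finset V} {u v w x : V}

lemma Walk.IsCycle.mem_support_of_adj {c : G.Walk v v} (hc : c.IsCycle)
    (hcs : ∀ x ∈ c.support, x ∈ s) (hdeg : ∀ u ∈ s, G.degreeOn s u ≤ 2) (hu : u ∈ c.support)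
    (hw : w ∈ s) (huw : G.Adj u w) : w ∈ c.support := by
  by_contra hwc
  obtain ⟨x, y, hxy, hux, huy, hx, hy⟩ := hc.exists_adj_ne hu
  have hsub : {x, y, w} ⊆ {w ∈ s | G.Adj u w} := by
    intro a ha
    simp only [mem_insert, mem_singleton] at ha
    rcases ha with rfl | rfl | rfl
    exacts [mem_filter.2 ⟨hcs a hx, hux⟩, mem_filter.2 ⟨hcs a hy, huy⟩, mem_filter.2 ⟨hw, huw⟩]
  have hcard : #{x, y, w} = 3 := by
    rw [card_insert_of_notMem, card_pair fun h : y = w => hwc (h ▸ hy)]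
    simp only [mem_insert, mem_singleton, not_or]
    exact ⟨hxy, fun h : x = w => hwc (h ▸ hx)⟩
  have := card_le_card hsub
  have := hdeg u (hcs u hu)
  rw [degreeOn] at this
  omega

lemma Walk.IsCycle.isAdjClosed_support {c : G.Walk v v} (hc : c.IsCycle)
    (hcs : ∀ x ∈ c.support, x ∈ s) (hdeg : ∀ u ∈ s, G.degreeOn s u ≤ 2) :
    G.IsAdjClosed s c.support.toFinset := fun _ ha _ hb hab =>
  List.mem_toFinset.2 (hc.mem_support_of_adj hcs hdeg (List.mem_toFinset.1 ha) hb hab)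

/-- A cycle avoiding `x` would be a union of components of `G[s]`, yet `c` joins it to `x`. -/
lemma Walk.isAcyclicOn_erase_support {c : G.Walk v v}
    (hcs : ∀ x ∈ c.support, x ∈ s) (hdeg : ∀ u ∈ s, G.degreeOn s u ≤ 2) (hx : x ∈ c.support) :
    G.IsAcyclicOn (c.support.toFinset.erase x) := by
  intro u c₂ hc₂
  by_contra! hsub
  have hc₂s : ∀ y ∈ c₂.support, y ∈ s := fun y hy =>
    hcs y (List.mem_toFinset.1 (mem_of_mem_erase (hsub y hy)))
  have hu : u ∈ c.support := List.mem_toFinset.1 (mem_of_mem_erase (hsub u c₂.start_mem_support))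
  have hx₂ := (c.rotate u hu).support_subset_of_isAdjClosed (hc₂.isAdjClosed_support hc₂s hdeg)
    (List.mem_toFinset.2 c₂.start_mem_support)
    (fun y hy => hcs y ((c.mem_support_rotate_iff u hu).1 hy)) x
    ((c.mem_support_rotate_iff u hu).2 hx)
  exact (mem_erase.1 (hsub x (List.mem_toFinset.1 hx₂))).1 rfl

variable (G) in
/-- `C` is the vertex set of a cycle forming a connected component of `G[s]`. -/
structure IsCycleComponentOn (s C : Finset V) : Prop where
  nonempty : C.Nonempty
  subset : C ⊆ s
  isAdjClosed : G.IsAdjClosed s C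
  degreeOn_eq_two : ∀ u ∈ C, G.degreeOn C u = 2
  isAcyclicOn_erase : ∀ x ∈ C, G.IsAcyclicOn (C.erase x)

lemma exists_isCycleComponentOn (hdeg : ∀ u ∈ s, G.degreeOn s u ≤ 2) (h : ¬ G.IsAcyclicOn s) :
    ∃ C, G.IsCycleComponentOn s C := by
  simp only [IsAcyclicOn, not_forall, not_exists, not_and, not_not] at h
  obtain ⟨v, c, hc, hcs⟩ := h
  have hCs : c.support.toFinset ⊆ s := fun x hx => hcs x (List.mem_toFinset.1 hx)
  have hcl := hc.isAdjClosed_support hcs hdeg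
  refine ⟨c.support.toFinset, ⟨⟨v, List.mem_toFinset.2 c.start_mem_support⟩, hCs, hcl,
    fun u hu => ?_, fun x hx => c.isAcyclicOn_erase_support hcs hdeg (List.mem_toFinset.1 hx)⟩⟩
  obtain ⟨x, y, hxy, hux, huy, hx, hy⟩ := hc.exists_adj_ne (List.mem_toFinset.1 hu)
  have hpair : #{x, y} ≤ G.degreeOn c.support.toFinset u := card_le_card fun a ha => by
    rcases mem_insert.1 ha with rfl | ha
    · exact mem_filter.2 ⟨List.mem_toFinset.2 hx, hux⟩
    · exact mem_singleton.1 ha ▸ mem_filter.2 ⟨List.mem_toFinset.2 hy, huy⟩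
  rw [card_pair hxy] at hpair
  have := degreeOn_of_isAdjClosed hCs hcl hu ▸ hdeg u (hCs hu)
  omega

namespace IsCycleComponentOn

variable (hC : G.IsCycleComponentOn s C)
include hC

lemma three_le_card : 3 ≤ #C := by
  obtain ⟨u, hu⟩ := hC.nonempty
  have := card_le_card (closedNbhdOn_subset (G := G) hu)
  rw [card_closedNbhdOn, hC.degreeOn_eq_two u hu] at this
  exact this

lemma degreeSumOn_eq : G.degreeSumOn s = 2 * #C + G.degreeSumOn (s \ C) := by
  rw [degreeSumOn_of_isAdjClosed hC.subset hC.isAdjClosed, degreeSumOn,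
    sum_congr rfl hC.degreeOn_eq_two, sum_const, smul_eq_mul, mul_comm]

lemma exists_isAcyclicOn_union (hFs : F ⊆ s \ C) (hF : G.IsAcyclicOn F) :
    ∃ F' ⊆ s, G.IsAcyclicOn F' ∧ #F' + 1 = #F + #C := by
  obtain ⟨x, hx⟩ := hC.nonempty
  have hdisj : Disjoint F (C.erase x) := Finset.disjoint_left.2 fun a ha haC =>
    (mem_sdiff.1 (hFs ha)).2 (mem_of_mem_erase haC)
  refine ⟨F ∪ C.erase x, union_subset (hFs.trans sdiff_subset)
    ((erase_subset x C).trans hC.subset), hF.union (hC.isAcyclicOn_erase x hx) ?_, ?_⟩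
  · intro a ha b hb hab
    exact (mem_sdiff.1 (hFs ha)).2
      (hC.isAdjClosed b (mem_of_mem_erase hb) a (mem_sdiff.1 (hFs ha)).1 hab.symm)
  · rw [card_union_of_disjoint hdisj, card_erase_of_mem hx]
    have := hC.three_le_card
    omega

lemma isCluster134On (h3 : #C = 3) (h : G.IsCluster134On (s \ C)) : G.IsCluster134On s := by
  have hclique : G.IsClique (C : Set V) :=
    isClique_of_forall_degreeOn fun u hu => by rw [hC.degreeOn_eq_two u hu, h3]
  exact (isCluster134On_iff_of_isAdjClosed hC.subset hC.isAdjClosed).2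
    ⟨isCluster134On_of_isClique hclique (by omega), h⟩

end IsCycleComponentOn

end CycleComponents

section ForestBound

variable [DecidableRel G.Adj] {s C : Finset V} {v : V}

variable (G) in
/-- Some induced forest `F ⊆ s` has `|F| ≥ |s| - e(G[s]) / 3`. -/
def HasForestBoundOn (s : Finset V) : Prop :=
  ∃ F ⊆ s, G.IsAcyclicOn F ∧ 6 * #s ≤ 6 * #F + G.degreeSumOn s

variable (G) in
/-- No induced forest `F ⊆ s` has `|F| > |s| - e(G[s]) / 3`. -/
def IsExtremalOn (s : Finset V) : Prop :=
  ∀ F ⊆ s, G.IsAcyclicOn F → 6 * #F + G.degreeSumOn s ≤ 6 * #s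

lemma IsAcyclicOn.hasForestBoundOn (h : G.IsAcyclicOn s) : G.HasForestBoundOn s :=
  ⟨s, Subset.rfl, h, by omega⟩

lemma IsExtremalOn.isCluster134On_of_isAcyclicOn (hext : G.IsExtremalOn s)
    (h : G.IsAcyclicOn s) : G.IsCluster134On s :=
  isCluster134On_of_degreeSumOn_eq_zero (by have := hext s Subset.rfl h; omega)

variable [DecidableEq V]

lemma HasForestBoundOn.insert (hv : v ∉ s) (h3 : 3 ≤ G.degreeOn s v)
    (h : G.HasForestBoundOn s) : G.HasForestBoundOn (insert v s) := by
  obtain ⟨F, hFs, hF, hbound⟩ := h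
  refine ⟨F, hFs.trans (subset_insert v s), hF, ?_⟩
  rw [card_insert_of_notMem hv, degreeSumOn_insert hv]
  omega

lemma IsExtremalOn.of_insert (hv : v ∉ s) (h3 : 3 ≤ G.degreeOn s v)
    (h : G.IsExtremalOn (insert v s)) : G.IsExtremalOn s := fun F hFs hF => by
  have := h F (hFs.trans (subset_insert v s)) hF
  rw [card_insert_of_notMem hv, degreeSumOn_insert hv] at this
  omega

lemma IsExtremalOn.degreeOn_le_three (hv : v ∉ s) (h : G.IsExtremalOn (insert v s))
    (hs : G.HasForestBoundOn s) : G.degreeOn s v ≤ 3 := by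
  obtain ⟨F, hFs, hF, hbound⟩ := hs
  have := h F (hFs.trans (subset_insert v s)) hF
  rw [card_insert_of_notMem hv, degreeSumOn_insert hv] at this
  omega

/-- Unless the three neighbours of `v` form a triangle component of `G[s]`, `v` extends a
maximum forest of `G[s]`, which contradicts extremality. -/
lemma IsCluster134On.insert_of_isExtremalOn (hs : G.IsCluster134On s) (hv : v ∉ s)
    (h3 : G.degreeOn s v = 3) (h : G.IsExtremalOn (insert v s)) :
    G.IsCluster134On (insert v s) := by
  by_cases hB : ∃ z ∈ s, G.closedNbhdOn s z = {w ∈ s | G.Adj v w}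
  · obtain ⟨z, hz, hB⟩ := hB
    exact hs.insert_of_closedNbhdOn_eq hv hz hB h3
  push Not at hB
  obtain ⟨T, hTs, hT, hcount⟩ := hs.exists_isAcyclicOn_insert hv fun z hz h2 hsub =>
    hB z hz (eq_of_subset_of_card_le hsub (by
      rw [card_closedNbhdOn]
      change G.degreeOn s v ≤ _
      omega))
  have := h (insert v T) (insert_subset_insert v hTs) hT
  rw [card_insert_of_notMem fun h => hv (hTs h), card_insert_of_notMem hv,
    degreeSumOn_insert hv, h3] at this
  omega

namespace IsCycleComponentOn

variable (hC : G.IsCycleComponentOn s C)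
include hC

lemma hasForestBoundOn (h : G.HasForestBoundOn (s \ C)) : G.HasForestBoundOn s := by
  obtain ⟨F, hFs, hF, hbound⟩ := h
  obtain ⟨F', hF's, hF', hcard⟩ := hC.exists_isAcyclicOn_union hFs hF
  refine ⟨F', hF's, hF', ?_⟩
  rw [hC.degreeSumOn_eq, ← card_sdiff_add_card_eq_card hC.subset]
  have := hC.three_le_card
  omega

lemma isExtremalOn_sdiff (h : G.IsExtremalOn s) : G.IsExtremalOn (s \ C) := fun F hFs hF => by
  obtain ⟨F', hF's, hF', hcard⟩ := hC.exists_isAcyclicOn_union hFs hF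
  have := h F' hF's hF'
  rw [hC.degreeSumOn_eq, ← card_sdiff_add_card_eq_card hC.subset] at this
  have := hC.three_le_card
  omega

lemma card_eq_three (h : G.IsExtremalOn s) (hbound : G.HasForestBoundOn (s \ C)) : #C = 3 := by
  obtain ⟨F, hFs, hF, hbound⟩ := hbound
  obtain ⟨F', hF's, hF', hcard⟩ := hC.exists_isAcyclicOn_union hFs hF
  have := h F' hF's hF'
  rw [hC.degreeSumOn_eq, ← card_sdiff_add_card_eq_card hC.subset] at this
  have := hC.three_le_card
  omega

end IsCycleComponentOn

theorem hasForestBoundOn_and_isCluster134On (s : Finset V) :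
    G.HasForestBoundOn s ∧ (G.IsExtremalOn s → G.IsCluster134On s) := by
  induction s using Finset.strongInduction with
  | H s ih =>
  by_cases hacyc : G.IsAcyclicOn s
  · exact ⟨hacyc.hasForestBoundOn, fun hext => hext.isCluster134On_of_isAcyclicOn hacyc⟩
  by_cases hdeg : ∃ v ∈ s, 3 ≤ G.degreeOn s v
  · obtain ⟨v, hv, h3⟩ := hdeg
    obtain ⟨s, hvs, rfl⟩ : ∃ t, v ∉ t ∧ s = insert v t :=
      ⟨s.erase v, notMem_erase v s, (insert_erase hv).symm⟩
    rw [degreeOn_insert_self] at h3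
    obtain ⟨hbound, hcluster⟩ := ih s (ssubset_insert hvs)
    refine ⟨hbound.insert hvs h3, fun hext => ?_⟩
    have h3' := le_antisymm (hext.degreeOn_le_three hvs hbound) h3
    exact (hcluster (hext.of_insert hvs h3)).insert_of_isExtremalOn hvs h3' hext
  push Not at hdeg
  obtain ⟨C, hC⟩ := exists_isCycleComponentOn (fun u hu => Nat.le_of_lt_succ (hdeg u hu)) hacyc
  obtain ⟨hbound, hcluster⟩ := ih (s \ C) (sdiff_ssubset hC.subset hC.nonempty)
  exact ⟨hC.hasForestBoundOn hbound, fun hext =>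
    hC.isCluster134On (hC.card_eq_three hext hbound) (hcluster (hC.isExtremalOn_sdiff hext))⟩

end ForestBound

end SimpleGraph

open SimpleGraph

/-- For `n ≤ 4t` the recursion never fires; truncated subtraction covers `n < 2t`. -/
lemma g_eq_of_le_four_mul {t n : ℕ} (h : n ≤ 4 * t) : g t n = 3 * (n - 2 * t) := by
  cases n with
  | zero => simp [g]
  | succ n =>
    simp only [g]
    split_ifs <;> omega

theorem graph_claw_free_equality_small_general {V : Type*} [Fintype V] (n t : ℕ)
    (hnt : n < 4 * t) (hcard : Fintype.card V = n) (G : SimpleGraph V)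
    (hforest : ∀ S : Set V, S.ncard = 2 * t + 1 → ¬ (G.induce S).IsAcyclic)
    (hedges : G.edgeSet.ncard = g t n) :
    (∀ u w : V, G.Reachable u w → u ≠ w → G.Adj u w) ∧
    (∀ v : V, (G.connectedComponentMk v).supp.ncard = 1 ∨
      (G.connectedComponentMk v).supp.ncard = 3 ∨
      (G.connectedComponentMk v).supp.ncard = 4) := by
  classical
  have hsmall (F : Finset V) (hF : G.IsAcyclicOn F) : #F ≤ 2 * t := by
    by_contra! hbig
    obtain ⟨S, hSF, hS⟩ := exists_subset_card_eq hbig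
    exact hforest S (by rw [Set.ncard_coe_finset, hS]) (hF.mono hSF).isAcyclic_induce
  have hext : G.IsExtremalOn univ := fun F _ hF => by
    rw [← coe_edgeFinset, Set.ncard_coe_finset, g_eq_of_le_four_mul hnt.le] at hedges
    rw [degreeSumOn_univ, hedges, card_univ, hcard]
    have := hsmall F hF
    have := hcard ▸ card_le_univ F
    omega
  obtain ⟨hcluster, hdeg⟩ := (hasForestBoundOn_and_isCluster134On univ).2 hext
  refine ⟨fun u w ⟨p⟩ => hcluster.adj_of_walk p, fun v => ?_⟩
  rw [hcluster.supp_connectedComponentMk, Set.ncard_coe_finset, card_closedNbhdOn]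
  rcases hdeg v (mem_univ v) with h | h | h <;> simp [h]

/-- Equality case for `n < 4t`: a simple graph on `n ≥ 1` vertices with no induced forest
on `2t+1` vertices (`t ≥ 1`) and exactly `g(n,t)` edges has every connected component a
complete graph on `1`, `3` or `4` vertices. -/
theorem graph_claw_free_equality_small {V : Type*} [Fintype V] (n t : ℕ) (hn : 1 ≤ n)
    (ht : 1 ≤ t) (hnt : n < 4 * t) (hcard : Fintype.card V = n) (G : SimpleGraph V)
    (hforest : ∀ S : Set V, S.ncard = 2 * t + 1 → ¬ (G.induce S).IsAcyclic)
    (hedges : G.edgeSet.ncard = g t n) :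
    (∀ u w : V, G.Reachable u w → u ≠ w → G.Adj u w) ∧
    (∀ v : V, (G.connectedComponentMk v).supp.ncard = 1 ∨
      (G.connectedComponentMk v).supp.ncard = 3 ∨
      (G.connectedComponentMk v).supp.ncard = 4) :=
  graph_claw_free_equality_small_general n t hnt hcard G hforest hedges
end
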